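/- arXiv:2312.11039 — 2 statements merged into one kernel-verified Lean document; each statement's English description precedes it below -/
import Mathlib

section
/- Let {eₙ}ₙ₌₁^∞ be an orthonormal basis of a Hilbert space H. If a sequence {xₙ} ⊂ H satisfies ∑ₙ ‖xₙ − eₙ‖² < 1, then {xₙ} is a Riesz basis of H; that is, there exists a bounded invertible linear operator L : H → H with L(eₙ) = xₙ for all n. -/
/-!
Write `xₙ = eₙ + dₙ`. Since `∑ ‖dₙ‖² < ∞`, Cauchy–Schwarz makes `v ↦ ∑ ⟪eₙ, v⟫ dₙ` a bounded
operator `T` with `‖T‖ ≤ (∑ ‖dₙ‖²)^{1/2} < 1`, so `1 + T` is invertible by the Neumann series,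
and it sends `eₙ` to `eₙ + dₙ = xₙ`.
-/

namespace lp

variable {ι 𝕜 F : Type*} [RCLike 𝕜] [NormedAddCommGroup F] {d : ι → F}

theorem exists_hasSum_norm_mul_norm_le (f : ℓ²(ι, 𝕜)) (hd : Summable fun i => ‖d i‖ ^ 2) :
    ∃ C ≤ ‖f‖ * √(∑' i, ‖d i‖ ^ 2), HasSum (fun i => ‖f i‖ * ‖d i‖) C := by
  have hf : HasSum (fun i => ‖f i‖ ^ (2 : ℝ)) (‖f‖ ^ (2 : ℝ)) := by
    simpa using lp.hasSum_norm (p := 2) (by norm_num) f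
  have hd' : HasSum (fun i => ‖d i‖ ^ (2 : ℝ)) (√(∑' i, ‖d i‖ ^ 2) ^ (2 : ℝ)) := by
    simpa [Real.rpow_two, Real.sq_sqrt (tsum_nonneg fun i => sq_nonneg ‖d i‖)] using hd.hasSum
  obtain ⟨C, -, hC, hsum⟩ := Real.inner_le_Lp_mul_Lq_hasSum_of_nonneg .two_two (norm_nonneg f)
    (Real.sqrt_nonneg _) (fun i => norm_nonneg (f i)) (fun i => norm_nonneg (d i)) hf hd'
  exact ⟨C, hC, hsum⟩

variable [NormedSpace 𝕜 F]

theorem norm_tsum_smul_le (f : ℓ²(ι, 𝕜)) (hd : Summable fun i => ‖d i‖ ^ 2) :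
    ‖∑' i, f i • d i‖ ≤ √(∑' i, ‖d i‖ ^ 2) * ‖f‖ := by
  obtain ⟨C, hC, hsum⟩ := exists_hasSum_norm_mul_norm_le f hd
  simp only [← norm_smul] at hsum
  calc ‖∑' i, f i • d i‖ ≤ ∑' i, ‖f i • d i‖ := norm_tsum_le_tsum_norm hsum.summable
    _ = C := hsum.tsum_eq
    _ ≤ √(∑' i, ‖d i‖ ^ 2) * ‖f‖ := by rwa [mul_comm]

variable [CompleteSpace F]

theorem summable_smul (f : ℓ²(ι, 𝕜)) (hd : Summable fun i => ‖d i‖ ^ 2) :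
    Summable fun i => f i • d i := by
  obtain ⟨C, -, hsum⟩ := exists_hasSum_norm_mul_norm_le f hd
  exact Summable.of_norm (by simpa only [norm_smul] using hsum.summable)

noncomputable def synthesis (hd : Summable fun i => ‖d i‖ ^ 2) : ℓ²(ι, 𝕜) →L[𝕜] F :=
  LinearMap.mkContinuous
    { toFun := fun f => ∑' i, f i • d i
      map_add' := fun f g => by
        simp only [← (summable_smul f hd).tsum_add (summable_smul g hd), lp.coeFn_add,
          Pi.add_apply, add_smul]
      map_smul' := fun c f => by
        simp only [← (summable_smul f hd).tsum_const_smul c, lp.coeFn_smul, Pi.smul_apply,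
          smul_smul, smul_eq_mul, RingHom.id_apply] }
    √(∑' i, ‖d i‖ ^ 2) (norm_tsum_smul_le · hd)

theorem synthesis_apply (hd : Summable fun i => ‖d i‖ ^ 2) (f : ℓ²(ι, 𝕜)) :
    synthesis hd f = ∑' i, f i • d i :=
  rfl

theorem synthesis_single [DecidableEq ι] (hd : Summable fun i => ‖d i‖ ^ 2) (i : ι) :
    synthesis hd (lp.single 2 i (1 : 𝕜)) = d i := by
  rw [synthesis_apply, tsum_eq_single i fun j hj => by simp [Pi.single_eq_of_ne hj]]
  simp

theorem norm_synthesis_le (hd : Summable fun i => ‖d i‖ ^ 2) :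
    ‖(synthesis hd : ℓ²(ι, 𝕜) →L[𝕜] F)‖ ≤ √(∑' i, ‖d i‖ ^ 2) :=
  LinearMap.mkContinuous_norm_le _ (Real.sqrt_nonneg _) _

end lp

/-- Let `{eₙ}` be an orthonormal basis of a (separable, complex) Hilbert space `H`. If
`{xₙ} ⊂ H` satisfies `∑ₙ ‖xₙ − eₙ‖² < 1`, then `{xₙ}` is a Riesz basis of `H`: there is a
bounded invertible linear operator `L : H → H` (a continuous linear equivalence) with
`L(eₙ) = xₙ` for all `n`. -/
theorem riesz_basis_of_small_perturbation_of_onb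
    {H : Type*} [NormedAddCommGroup H] [InnerProductSpace ℂ H] [CompleteSpace H]
    (e : HilbertBasis ℕ ℂ H) (x : ℕ → H)
    (h_sum : Summable (fun n : ℕ => ‖x n - e n‖ ^ 2))
    (h_lt : (∑' n : ℕ, ‖x n - e n‖ ^ 2) < 1) :
    ∃ L : H ≃L[ℂ] H, ∀ n : ℕ, L (e n) = x n := by
  set T : H →L[ℂ] H :=
    (lp.synthesis h_sum).comp e.repr.toContinuousLinearEquiv.toContinuousLinearMap
  have hT : ‖-T‖ < 1 := by
    rw [norm_neg]
    calc ‖T‖ ≤ ‖lp.synthesis h_sum‖ * ‖e.repr.toContinuousLinearEquiv.toContinuousLinearMap‖ :=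
          ContinuousLinearMap.opNorm_comp_le _ _
      _ ≤ √(∑' n, ‖x n - e n‖ ^ 2) * 1 := by
          gcongr
          · exact lp.norm_synthesis_le h_sum
          · exact ContinuousLinearMap.opNorm_le_bound _ zero_le_one fun v => by simp
      _ < 1 := by rwa [mul_one, Real.sqrt_lt' one_pos, one_pow]
  refine ⟨ContinuousLinearEquiv.unitsEquiv ℂ H (Units.oneSub (-T) hT), fun n => ?_⟩
  have hTe : T (e n) = x n - e n := by
    simp [T, e.repr_self, lp.synthesis_single]
  simp [ContinuousLinearEquiv.unitsEquiv_apply, Units.val_oneSub, hTe]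
end

section
/- There do not exist a function g ∈ L²(ℝ), a uniformly discrete sequence {λₙ} ⊂ ℝ, functions {gₙ*} ⊂ L²(ℝ), and a constant K, such that every f ∈ L²(ℝ) admits a series expansion f(x) = ∑ₙ₌₁^∞ ⟨f, gₙ*⟩ g(x − λₙ) convergent in the L²(ℝ) norm, while also ∑ₙ₌₁^∞ |⟨f, gₙ*⟩|² ≤ K ‖f‖² for all f ∈ L²(ℝ). -/
open MeasureTheory Filter Complex ComplexConjugate
open scoped ENNReal InnerProductSpace Topology Real

/-!
If every `f` were the `L²`-limit of `∑ cₙ(f) g(· - λₙ)` with `∑ |cₙ(f)|² ≤ K ‖f‖²`, then for a unit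
vector `f`, expanding `1 = ⟪f, f⟫` and applying Cauchy–Schwarz gives
`1 ≤ K ∑ₙ |⟪g(· - λₙ), f⟫|²`. Take for `f` the normalized Fourier modes `f_ω` of the interval
`(0, δ]`. Moving the translation across, `⟪g(· - λₙ), f_ω⟫ = ⟪g, f_ω(· + λₙ)⟫`, and since the
`λₙ` are `δ`-separated the functions `f_ω(· + λₙ)`, `(n, ω) ∈ ℕ × ℤ`, form an orthonormal system
(disjoint supports for different `n`, Fourier modes of one interval for equal `n`). Summing the
lower bound over the infinitely many `ω` and using Bessel's inequality gives `∞ ≤ K ‖g‖²`.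
-/

theorem tsum_enorm_sq_eq_ofReal_tsum {ι E : Type*} [SeminormedAddCommGroup E] {f : ι → E}
    (hf : Summable fun i => ‖f i‖ ^ 2) :
    ∑' i, ‖f i‖ₑ ^ 2 = ENNReal.ofReal (∑' i, ‖f i‖ ^ 2) := by
  simp only [← ofReal_norm, ← ENNReal.ofReal_pow (norm_nonneg _)]
  exact (ENNReal.ofReal_tsum_of_nonneg (fun _ => by positivity) hf).symm

section InnerProductSpace
variable {𝕜 E : Type*} [RCLike 𝕜] [NormedAddCommGroup E] [InnerProductSpace 𝕜 E]

theorem Orthonormal.tsum_enorm_inner_sq_le {ι : Type*} {e : ι → E} (he : Orthonormal 𝕜 e)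
    (x : E) : ∑' i, ‖⟪e i, x⟫_𝕜‖ₑ ^ 2 ≤ ‖x‖ₑ ^ 2 := by
  rw [tsum_enorm_sq_eq_ofReal_tsum (he.inner_products_summable x), ← ofReal_norm,
    ← ENNReal.ofReal_pow (norm_nonneg _)]
  exact ENNReal.ofReal_le_ofReal (he.tsum_inner_products_le x)

theorem enorm_sum_mul_sq_le {ι : Type*} (s : Finset ι) (a b : ι → 𝕜) :
    ‖∑ i ∈ s, a i * b i‖ₑ ^ 2 ≤ (∑ i ∈ s, ‖a i‖ₑ ^ 2) * ∑ i ∈ s, ‖b i‖ₑ ^ 2 := by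
  simp only [enorm_eq_nnnorm]
  norm_cast
  calc ‖∑ i ∈ s, a i * b i‖₊ ^ 2 ≤ (∑ i ∈ s, ‖a i‖₊ * ‖b i‖₊) ^ 2 := by
        gcongr
        exact (nnnorm_sum_le _ _).trans_eq (by simp only [nnnorm_mul])
    _ ≤ _ := Finset.sum_mul_sq_le_sq_mul_sq s _ _

theorem enorm_pow_four_le_of_tendsto_sum_smul {x : E} {v : ℕ → E} {a : ℕ → 𝕜}
    (h : Tendsto (fun N => ∑ n ∈ Finset.range N, a n • v n) atTop (𝓝 x)) :
    ‖x‖ₑ ^ 4 ≤ (∑' n, ‖a n‖ₑ ^ 2) * ∑' n, ‖⟪v n, x⟫_𝕜‖ₑ ^ 2 := by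
  have hxx : ‖⟪x, x⟫_𝕜‖ₑ ^ 2 = ‖x‖ₑ ^ 4 := by
    simp [enorm_eq_nnnorm, inner_self_eq_norm_sq_to_K, ← pow_mul]
  have hlim : Tendsto (fun N => ‖∑ n ∈ Finset.range N, conj (a n) * ⟪v n, x⟫_𝕜‖ₑ ^ 2) atTop
      (𝓝 (‖x‖ₑ ^ 4)) := by
    rw [← hxx]
    simpa [Function.comp_def, sum_inner, inner_smul_left] using
      ((ENNReal.continuous_pow 2).tendsto _).comp
        (h.inner (𝕜 := 𝕜) (tendsto_const_nhds (x := x))).enorm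
  refine le_of_tendsto' hlim fun N => (enorm_sum_mul_sq_le _ _ _).trans ?_
  simp only [RCLike.enorm_conj]
  gcongr <;> exact ENNReal.sum_le_tsum _

end InnerProductSpace

namespace MeasureTheory

section Lp
variable {α E : Type*} [MeasurableSpace α] {μ : Measure α} {p : ℝ≥0∞}
  [NormedAddCommGroup E]

theorem MemLp.toLp_finsetSum {ι : Type*} (s : Finset ι) {f : ι → α → E}
    (hf : ∀ i, MemLp (f i) p μ) :
    (memLp_finsetSum s fun i _ => hf i).toLp (fun x => ∑ i ∈ s, f i x) =
      ∑ i ∈ s, (hf i).toLp (f i) := by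
  classical
  induction s using Finset.induction_on with
  | empty => exact MemLp.toLp_zero _
  | insert i s his ih =>
    simp only [Finset.sum_insert his, ← ih, ← MemLp.toLp_add]
    rfl

theorem tendsto_sum_toLp_of_tendsto_eLpNorm {𝕜 : Type*} [NormedField 𝕜] [NormedSpace 𝕜 E]
    [Fact (1 ≤ p)] {f : α → E} {v : ℕ → α → E} {a : ℕ → 𝕜}
    (hf : MemLp f p μ) (hv : ∀ n, MemLp (v n) p μ)
    (h : Tendsto (fun N => eLpNorm (fun x => f x - ∑ n ∈ Finset.range N, a n • v n x) p μ)
      atTop (𝓝 0)) :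
    Tendsto (fun N => ∑ n ∈ Finset.range N, a n • (hv n).toLp (v n)) atTop
      (𝓝 (hf.toLp f)) := by
  have hav : ∀ n, MemLp (fun x => a n • v n x) p μ := fun n => (hv n).const_smul (a n)
  have hS : ∀ N, hf.toLp f - ∑ n ∈ Finset.range N, a n • (hv n).toLp (v n) =
      (hf.sub (memLp_finsetSum _ fun n _ => hav n)).toLp
        (fun x => f x - ∑ n ∈ Finset.range N, a n • v n x) := fun N =>
    (congrArg (hf.toLp f - ·) (MemLp.toLp_finsetSum _ hav)).symm
  rw [tendsto_iff_norm_sub_tendsto_zero]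
  simpa [Function.comp_def, norm_sub_rev _ (hf.toLp f), hS, Lp.norm_toLp] using
    (ENNReal.tendsto_toReal ENNReal.zero_ne_top).comp h

theorem L2.inner_toLp_toLp {𝕜 : Type*} [RCLike 𝕜] {f g : α → 𝕜} (hf : MemLp f 2 μ)
    (hg : MemLp g 2 μ) : ⟪hf.toLp f, hg.toLp g⟫_𝕜 = ∫ x, conj (f x) * g x ∂μ := by
  rw [L2.inner_def]
  refine integral_congr_ae ?_
  filter_upwards [hf.coeFn_toLp, hg.coeFn_toLp] with x hfx hgx
  rw [hfx, hgx, RCLike.inner_apply, mul_comm]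

end Lp

section Translation
variable {G : Type*} [MeasurableSpace G] [AddGroup G] [MeasurableAdd G] {μ : Measure G}
  [μ.IsAddRightInvariant]

theorem MemLp.comp_sub_right {E : Type*} [NormedAddCommGroup E] {p : ℝ≥0∞} {f : G → E}
    (hf : MemLp f p μ) (c : G) : MemLp (fun x => f (x - c)) p μ :=
  hf.comp_measurePreserving (measurePreserving_sub_right μ c)

theorem L2.inner_toLp_comp_sub_right {𝕜 : Type*} [RCLike 𝕜] {u v w : G → 𝕜}
    (hu : MemLp u 2 μ) (hv : MemLp v 2 μ) (hw : MemLp w 2 μ) {c : G}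
    (hvw : ∀ x, v (x + c) = w x) :
    ⟪(hu.comp_sub_right c).toLp _, hv.toLp v⟫_𝕜 = ⟪hu.toLp u, hw.toLp w⟫_𝕜 := by
  rw [inner_toLp_toLp, inner_toLp_toLp,
    ← integral_sub_right_eq_self (fun x => conj (u x) * w x) c]
  simp [← hvw]

end Translation

end MeasureTheory

noncomputable def intervalExp (a L : ℝ) (ω : ℤ) : ℝ → ℂ :=
  Set.indicator (Set.Ioc a (a + L)) fun x => (√L : ℂ)⁻¹ * exp (2 * π * I * ω * (x - a) / L)

theorem intervalExp_add (a L : ℝ) (ω : ℤ) (c x : ℝ) :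
    intervalExp a L ω (x + c) = intervalExp (a - c) L ω x := by
  have hmem : x + c ∈ Set.Ioc a (a + L) ↔ x ∈ Set.Ioc (a - c) (a - c + L) := by
    simp only [Set.mem_Ioc]
    constructor <;> rintro ⟨h₁, h₂⟩ <;> constructor <;> linarith
  simp only [intervalExp, Set.indicator_apply, hmem]
  push_cast
  ring_nf

theorem memLp_intervalExp (a L : ℝ) (ω : ℤ) : MemLp (intervalExp a L ω) 2 volume := by
  refine (memLp_indicator_iff_restrict measurableSet_Ioc).2 (MemLp.of_bound ?_ (√L)⁻¹ ?_)
  · fun_prop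
  · exact Eventually.of_forall fun x => by
      simp [Complex.norm_exp, abs_of_nonneg (Real.sqrt_nonneg L)]

theorem integral_conj_intervalExp_mul {a L : ℝ} (hL : 0 < L) (ω ω' : ℤ) :
    ∫ x, conj (intervalExp a L ω x) * intervalExp a L ω' x = if ω = ω' then 1 else 0 := by
  have hprod : (fun x => conj (intervalExp a L ω x) * intervalExp a L ω' x) =
      Set.indicator (Set.Ioc a (a + L))
        fun x => (L : ℂ)⁻¹ * exp (2 * π * I * (ω' - ω) / L * ((x - a : ℝ) : ℂ)) := by
    ext x
    by_cases hx : x ∈ Set.Ioc a (a + L)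
    · simp only [intervalExp, Set.indicator_of_mem hx, map_mul, map_inv₀, ← exp_conj,
        map_div₀, map_sub, conj_ofReal, conj_I, map_ofNat, map_intCast]
      rw [mul_mul_mul_comm, ← exp_add, ← mul_inv, ← ofReal_mul, Real.mul_self_sqrt hL.le]
      push_cast
      ring_nf
    · simp [intervalExp, hx]
  rw [hprod, integral_indicator measurableSet_Ioc,
    ← intervalIntegral.integral_of_le (by linarith), intervalIntegral.integral_const_mul,
    intervalIntegral.integral_comp_sub_right (fun x => exp (2 * π * I * (ω' - ω) / L * x)),
    sub_self, add_sub_cancel_left]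
  split_ifs with h
  · subst h
    simp [hL.ne']
  · have hk : (ω' : ℂ) - ω ≠ 0 := sub_ne_zero.2 (by exact_mod_cast Ne.symm h)
    have hperiod : exp (2 * π * I * (ω' - ω) / L * L) = 1 := by
      rw [div_mul_cancel₀ _ (ofReal_ne_zero.2 hL.ne'),
        show 2 * π * I * ((ω' : ℂ) - ω) = ((ω' - ω : ℤ) : ℂ) * (2 * π * I) by push_cast; ring]
      exact exp_int_mul_two_pi_mul_I _
    rw [integral_exp_mul_complex (by simp [hk, hL.ne', Real.pi_ne_zero]), hperiod]
    simp

theorem orthonormal_intervalExp (a : ℝ) {L : ℝ} (hL : 0 < L) :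
    Orthonormal ℂ fun ω => (memLp_intervalExp a L ω).toLp (intervalExp a L ω) :=
  orthonormal_iff_ite.2 fun ω ω' => by
    rw [L2.inner_toLp_toLp, integral_conj_intervalExp_mul hL]

theorem disjoint_Ioc_of_le_abs_sub {a b L : ℝ} (h : L ≤ |a - b|) :
    Disjoint (Set.Ioc a (a + L)) (Set.Ioc b (b + L)) := by
  rcases le_abs'.1 h with h | h
  · exact Set.Ioc_disjoint_Ioc_of_le (by linarith)
  · exact (Set.Ioc_disjoint_Ioc_of_le (by linarith)).symm

theorem orthonormal_intervalExp_of_separated {ι : Type*} {a : ι → ℝ} {L : ℝ} (hL : 0 < L)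
    (hsep : ∀ i j, i ≠ j → L ≤ |a i - a j|) :
    Orthonormal ℂ fun p : ι × ℤ =>
      (memLp_intervalExp (a p.1) L p.2).toLp (intervalExp (a p.1) L p.2) := by
  classical
  refine orthonormal_iff_ite.2 fun ⟨i, ω⟩ ⟨j, ω'⟩ => ?_
  rw [L2.inner_toLp_toLp]
  by_cases hij : i = j
  · subst hij
    simp [integral_conj_intervalExp_mul hL]
  · have hzero : ∀ x, conj (intervalExp (a i) L ω x) * intervalExp (a j) L ω' x = 0 := by
      intro x
      by_cases hx : x ∈ Set.Ioc (a i) (a i + L)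
      · rw [intervalExp, intervalExp, Set.indicator_of_notMem
          (Set.disjoint_left.1 (disjoint_Ioc_of_le_abs_sub (hsep i j hij)) hx), mul_zero]
      · simp [intervalExp, hx]
    simp [hzero, hij]

theorem one_le_ofReal_mul_tsum_enorm_inner {α : Type*} [MeasurableSpace α] {μ : Measure α}
    {f : α → ℂ} {v : ℕ → α → ℂ} {a : ℕ → ℂ} {K : ℝ}
    (hf : MemLp f 2 μ) (hv : ∀ n, MemLp (v n) 2 μ) (hf1 : ‖hf.toLp f‖ = 1)
    (hexp : Tendsto (fun N => eLpNorm (fun x => f x - ∑ n ∈ Finset.range N, a n * v n x) 2 μ)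
      atTop (𝓝 0))
    (ha : Summable fun n => ‖a n‖ ^ 2)
    (haK : ∑' n, ‖a n‖ ^ 2 ≤ K * (eLpNorm f 2 μ).toReal ^ 2) :
    1 ≤ ENNReal.ofReal K * ∑' n, ‖⟪(hv n).toLp (v n), hf.toLp f⟫_ℂ‖ₑ ^ 2 := by
  rw [← Lp.norm_toLp f hf, hf1, one_pow, mul_one] at haK
  have hf1' : ‖hf.toLp f‖ₑ = 1 := by rw [← ofReal_norm, hf1, ENNReal.ofReal_one]
  calc 1 = ‖hf.toLp f‖ₑ ^ 4 := by rw [hf1', one_pow]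
    _ ≤ _ := enorm_pow_four_le_of_tendsto_sum_smul
      (tendsto_sum_toLp_of_tendsto_eLpNorm (𝕜 := ℂ) hf hv hexp)
    _ ≤ _ := by
      gcongr
      rw [tsum_enorm_sq_eq_ofReal_tsum ha]
      exact ENNReal.ofReal_le_ofReal haK

/-- There do not exist `g ∈ L²(ℝ)`, a uniformly discrete sequence `{λₙ} ⊂ ℝ`, functions
`{gₙ*} ⊂ L²(ℝ)` and a constant `K`, such that every `f ∈ L²(ℝ)` admits a series expansion
`f(x) = ∑ₙ ⟨f, gₙ*⟩ g(x − λₙ)` convergent in the `L²(ℝ)` norm, while also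
`∑ₙ |⟨f, gₙ*⟩|² ≤ K ‖f‖²` for all `f ∈ L²(ℝ)`. -/
theorem no_schauder_frame_of_discrete_translates_with_l2_coefficients :
    ¬ ∃ (g : ℝ → ℂ) (lam : ℕ → ℝ) (gs : ℕ → ℝ → ℂ) (K : ℝ),
      MemLp g 2 (volume : Measure ℝ) ∧
      (∃ δ : ℝ, 0 < δ ∧ ∀ m n : ℕ, m ≠ n → δ ≤ |lam m - lam n|) ∧
      (∀ n, MemLp (gs n) 2 (volume : Measure ℝ)) ∧
      (∀ f : ℝ → ℂ, MemLp f 2 (volume : Measure ℝ) →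
        Tendsto
          (fun N : ℕ => eLpNorm
            (fun x : ℝ => f x - ∑ n ∈ Finset.range N,
              (∫ t : ℝ, f t * conj (gs n t)) * g (x - lam n)) 2 (volume : Measure ℝ))
          atTop (nhds 0)) ∧
      (∀ f : ℝ → ℂ, MemLp f 2 (volume : Measure ℝ) →
        Summable (fun n : ℕ => ‖∫ t : ℝ, f t * conj (gs n t)‖ ^ 2) ∧
        (∑' n : ℕ, ‖∫ t : ℝ, f t * conj (gs n t)‖ ^ 2) ≤
          K * (eLpNorm f 2 (volume : Measure ℝ)).toReal ^ 2) := by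
  rintro ⟨g, lam, gs, K, hg, ⟨δ, hδ, hsep⟩, -, hexp, hbes⟩
  set e := fun p : ℕ × ℤ =>
    (memLp_intervalExp (-lam p.1) δ p.2).toLp (intervalExp (-lam p.1) δ p.2)
  have he : Orthonormal ℂ e :=
    orthonormal_intervalExp_of_separated (a := fun n => -lam n) hδ fun m n hmn => by
      show δ ≤ |-lam m - -lam n|
      rw [neg_sub_neg, abs_sub_comm]
      exact hsep m n hmn
  have hlow : ∀ ω : ℤ, 1 ≤ ENNReal.ofReal K * ∑' n, ‖⟪e (n, ω), hg.toLp g⟫_ℂ‖ₑ ^ 2 := by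
    intro ω
    have hF := memLp_intervalExp 0 δ ω
    obtain ⟨ha, haK⟩ := hbes _ hF
    convert one_le_ofReal_mul_tsum_enorm_inner hF (fun n => hg.comp_sub_right (lam n))
      ((orthonormal_intervalExp 0 hδ).1 ω) (hexp _ hF) ha haK using 4 with n
    rw [L2.inner_toLp_comp_sub_right hg hF (memLp_intervalExp _ δ ω)
      fun x => by rw [intervalExp_add, zero_sub], ← inner_conj_symm, RCLike.enorm_conj]
  have hinf : (⊤ : ℝ≥0∞) ≤ ENNReal.ofReal K * ‖hg.toLp g‖ₑ ^ 2 := calc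
    ⊤ = ∑' _ : ℤ, (1 : ℝ≥0∞) := (ENNReal.tsum_const_eq_top_of_ne_zero one_ne_zero).symm
    _ ≤ ∑' ω : ℤ, ENNReal.ofReal K * ∑' n, ‖⟪e (n, ω), hg.toLp g⟫_ℂ‖ₑ ^ 2 :=
      ENNReal.tsum_le_tsum hlow
    _ = ENNReal.ofReal K * ∑' p, ‖⟪e p, hg.toLp g⟫_ℂ‖ₑ ^ 2 := by
      rw [ENNReal.tsum_mul_left, ENNReal.tsum_prod', ENNReal.tsum_comm]
    _ ≤ _ := by gcongr; exact he.tsum_enorm_inner_sq_le _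
  exact ENNReal.mul_ne_top ENNReal.ofReal_ne_top (ENNReal.pow_ne_top enorm_ne_top)
    (top_le_iff.1 hinf)
end
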